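/- arXiv:1803.03696 — 3 statements merged into one kernel-verified Lean document; each statement's English description precedes it below -/
import Mathlib

section
/- Let G be a finite connected simple graph and let T be a set of vertices of G with |T| even. Then G has a T-join J with 2|J| ≤ 2|E(G)| − |E(Ĝ)|, where Ĝ is the maximal bridgeless subgraph of G; in particular, a T-join of G of minimum cardinality has at most |E(G)| − (1/2)|E(Ĝ)| edges. -/
open SimpleGraph Set

variable {V : Type*}

/-- `J` is a `T`-join of `G`: a set of edges of `G` such that a vertex has odd degree
in the spanning subgraph with edge set `J` iff it belongs to `T`. -/
def IsTJoin (G : SimpleGraph V) (T : Set V) (J : Set (Sym2 V)) : Prop :=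
  J ⊆ G.edgeSet ∧ ∀ v : V, (Odd {e ∈ J | v ∈ e}.ncard ↔ v ∈ T)

/-- The edge set of the maximal bridgeless subgraph of `G`: all non-bridge edges. -/
def nonBridgeEdges (G : SimpleGraph V) : Set (Sym2 V) :=
  {e ∈ G.edgeSet | ¬ G.IsBridge e}

/-- A graph is 2-edge-connected if it is connected, has at least two vertices,
and has no bridge. -/
def TwoEdgeConnected (G : SimpleGraph V) : Prop :=
  G.Connected ∧ Nontrivial V ∧ ∀ e, ¬ G.IsBridge e

/-- `H` is the edge set of an even subgraph of `G`: every vertex has even degree. -/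
def IsEvenEdgeSet (G : SimpleGraph V) (H : Set (Sym2 V)) : Prop :=
  H ⊆ G.edgeSet ∧ ∀ v : V, Even {e ∈ H | v ∈ e}.ncard

/-! Signed graphs: a signature is `σ : Sym2 V → Bool`, `σ e = true` meaning `e` is negative. -/

/-- The set of negative edges of `(G, σ)`. -/
def negEdgeSet (G : SimpleGraph V) (σ : Sym2 V → Bool) : Set (Sym2 V) :=
  {e ∈ G.edgeSet | σ e = true}

/-- The set of positive edges of `(G, σ)`. -/
def posEdgeSet (G : SimpleGraph V) (σ : Sym2 V → Bool) : Set (Sym2 V) :=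
  {e ∈ G.edgeSet | σ e = false}

/-- `G⁺`: the spanning subgraph of `G` on the positive edges. -/
def gplus (G : SimpleGraph V) (σ : Sym2 V → Bool) : SimpleGraph V :=
  G.deleteEdges {e | σ e = true}

/-- `C` is the edge set and `S` the vertex set of a cycle of `G`. -/
def IsCycleSet (G : SimpleGraph V) (C : Set (Sym2 V)) (S : Set V) : Prop :=
  ∃ (v : V) (w : G.Walk v v), w.IsCycle ∧ C = {e | e ∈ w.edges} ∧ S = {x | x ∈ w.support}

/-- `C` (with vertex set `S`) is a negative cycle: it has an odd number of negative edges. -/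
def IsNegCycle (G : SimpleGraph V) (σ : Sym2 V → Bool) (C : Set (Sym2 V)) (S : Set V) : Prop :=
  IsCycleSet G C S ∧ Odd {e ∈ C | σ e = true}.ncard

/-- `C` is (the edge set of) a positive cycle: it has an even number of negative edges. -/
def IsPosCycle (G : SimpleGraph V) (σ : Sym2 V → Bool) (C : Set (Sym2 V)) : Prop :=
  (∃ S, IsCycleSet G C S) ∧ Even {e ∈ C | σ e = true}.ncard

/-- `B` is a short barbell whose two negative cycles have edge sets `C₁` and `C₂`:
the two negative cycles meet in exactly one vertex. -/
def IsShortBarbellWith (G : SimpleGraph V) (σ : Sym2 V → Bool)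
    (B C₁ C₂ : Set (Sym2 V)) : Prop :=
  ∃ S₁ S₂, IsNegCycle G σ C₁ S₁ ∧ IsNegCycle G σ C₂ S₂ ∧
    (∃ v, S₁ ∩ S₂ = {v}) ∧ B = C₁ ∪ C₂

/-- `B` is a long barbell whose two negative cycles have edge sets `C₁` and `C₂`:
two vertex-disjoint negative cycles joined by a path meeting them only in its endpoints. -/
def IsLongBarbellWith (G : SimpleGraph V) (σ : Sym2 V → Bool)
    (B C₁ C₂ : Set (Sym2 V)) : Prop :=
  ∃ (S₁ S₂ : Set V) (u v : V) (p : G.Walk u v), IsNegCycle G σ C₁ S₁ ∧ IsNegCycle G σ C₂ S₂ ∧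
    Disjoint S₁ S₂ ∧ p.IsPath ∧ u ∈ S₁ ∧ v ∈ S₂ ∧
    {x | x ∈ p.support} ∩ S₁ = {u} ∧ {x | x ∈ p.support} ∩ S₂ = {v} ∧
    B = C₁ ∪ C₂ ∪ {e | e ∈ p.edges}

/-- `B` is a barbell whose two negative cycles have edge sets `C₁` and `C₂`. -/
def IsBarbellWith (G : SimpleGraph V) (σ : Sym2 V → Bool) (B C₁ C₂ : Set (Sym2 V)) : Prop :=
  IsShortBarbellWith G σ B C₁ C₂ ∨ IsLongBarbellWith G σ B C₁ C₂

/-- `B` is (the edge set of) a barbell of `(G, σ)`. -/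
def IsBarbell (G : SimpleGraph V) (σ : Sym2 V → Bool) (B : Set (Sym2 V)) : Prop :=
  ∃ C₁ C₂, IsBarbellWith G σ B C₁ C₂

/-- A signed-circuit is a positive cycle or a barbell. -/
def IsSignedCircuit (G : SimpleGraph V) (σ : Sym2 V → Bool) (D : Set (Sym2 V)) : Prop :=
  IsPosCycle G σ D ∨ IsBarbell G σ D

open Classical in
/-- `τ(G,σ)`: `|E(G)|` if there is no barbell, otherwise the minimum over all barbells of
the total number of edges of its two negative cycles. -/
noncomputable def tau (G : SimpleGraph V) (σ : Sym2 V → Bool) : ℕ :=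
  if ∃ B, IsBarbell G σ B then
    sInf {n | ∃ B C₁ C₂, IsBarbellWith G σ B C₁ C₂ ∧ n = C₁.ncard + C₂.ncard}
  else G.edgeSet.ncard

/-- The length of a family of signed-circuits (counted with multiplicity). -/
noncomputable def circuitLength (𝓕 : Multiset (Set (Sym2 V))) : ℕ := (𝓕.map Set.ncard).sum

/-- `𝓕` is a signed-circuit cover of `(G, σ)`. -/
def IsSignedCircuitCover (G : SimpleGraph V) (σ : Sym2 V → Bool)
    (𝓕 : Multiset (Set (Sym2 V))) : Prop :=
  (∀ C ∈ 𝓕, IsSignedCircuit G σ C) ∧ ∀ e ∈ G.edgeSet, ∃ C ∈ 𝓕, e ∈ C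

/-- `e` has exactly one endpoint in `U`. -/
def Crosses (U : Set V) (e : Sym2 V) : Prop :=
  ∃ x y, e = s(x, y) ∧ x ∈ U ∧ y ∉ U

open Classical in
/-- The signature obtained from `σ` by switching at the vertex set `U`. -/
noncomputable def switchSign (σ : Sym2 V → Bool) (U : Set V) : Sym2 V → Bool :=
  fun e => if Crosses U e then !(σ e) else σ e

/-- Two signatures are equivalent if one is obtained from the other by switching. -/
def EquivSign (σ σ' : Sym2 V → Bool) : Prop := ∃ U : Set V, σ' = switchSign σ U

/-- The minimum number of negative edges lying entirely inside `W`, over all signatures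
equivalent to `σ` (the negativeness of the signed subgraph induced on `W`). -/
noncomputable def negOn (G : SimpleGraph V) (σ : Sym2 V → Bool) (W : Set V) : ℕ :=
  sInf {n | ∃ U : Set V,
    n = {e | e ∈ G.edgeSet ∧ (∀ x ∈ e, x ∈ W) ∧ switchSign σ U e = true}.ncard}

/-- The negativeness `ε(G,σ)`. -/
noncomputable def negativeness (G : SimpleGraph V) (σ : Sym2 V → Bool) : ℕ :=
  negOn G σ Set.univ

/-- The signed subgraph induced on `W` is balanced. -/
def BalancedOn (G : SimpleGraph V) (σ : Sym2 V → Bool) (W : Set V) : Prop :=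
  negOn G σ W = 0

/-- `(G, σ)` is flow-admissible: each connected component has negativeness ≠ 1, and
for every bridge, neither of the two components obtained by deleting it is balanced. -/
def FlowAdmissible (G : SimpleGraph V) (σ : Sym2 V → Bool) : Prop :=
  ∀ x : V,
    negOn G σ {y | G.Reachable x y} ≠ 1 ∧
    ∀ e ∈ G.edgeSet, G.IsBridge e → (∀ z ∈ e, G.Reachable x z) →
      ∀ z ∈ e, ¬ BalancedOn G σ {y | (G.deleteEdges {e}).Reachable z y}

/-- `{e, f}` is a 2-edge-cut of `G`. -/
def IsTwoEdgeCut (G : SimpleGraph V) (e f : Sym2 V) : Prop :=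
  e ∈ G.edgeSet ∧ f ∈ G.edgeSet ∧ e ≠ f ∧ ¬ G.IsBridge e ∧ ¬ G.IsBridge f ∧
    ¬ (G.deleteEdges {e, f}).Connected

/-!
If `J` is a minimum `T`-join and `H` is an even edge set, then `J ∆ H` is again a `T`-join, so `J`
contains at most half of the edges of `H`. Now average over all even edge sets. No bridge lies
in an even edge set, and every non-bridge edge `e` lies in exactly half of them, because
symmetric difference with a cycle through `e` is an involution exchanging those containing `e`
with those avoiding it. Hence `J` contains at most half of the non-bridge edges, and the
bridges add at most `|E(G)| - |E(Ĝ)|` edges to `J`.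
-/

open scoped symmDiff Finset

theorem Set.ncard_symmDiff_add_two_mul_ncard_inter {α : Type*} {s t : Set α} (hs : s.Finite)
    (ht : t.Finite) : (s ∆ t).ncard + 2 * (s ∩ t).ncard = s.ncard + t.ncard := by
  have hsub : s ∩ t ⊆ s ∪ t := Set.inter_subset_left.trans Set.subset_union_left
  rw [symmDiff_eq_sup_sdiff_inf]
  change ((s ∪ t) \ (s ∩ t)).ncard + _ = _
  have := Set.ncard_sdiff_add_ncard_of_subset hsub (hs.union ht)
  have := Set.ncard_union_add_ncard_inter s t hs ht
  omega

theorem Set.odd_ncard_symmDiff_iff {α : Type*} {s t : Set α} (hs : s.Finite) (ht : t.Finite) :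
    Odd (s ∆ t).ncard ↔ ¬(Odd s.ncard ↔ Odd t.ncard) := by
  have := Set.ncard_symmDiff_add_two_mul_ncard_inter hs ht
  simp only [Nat.odd_iff]
  omega

section TJoin

variable {G : SimpleGraph V} {T₁ T₂ : Set V} {J₁ J₂ H H₁ H₂ : Set (Sym2 V)}

@[simp]
theorem isTJoin_empty_iff : IsTJoin G ∅ H ↔ IsEvenEdgeSet G H := by
  simp [IsTJoin, IsEvenEdgeSet]

theorem IsTJoin.symmDiff [Finite V] (h₁ : IsTJoin G T₁ J₁) (h₂ : IsTJoin G T₂ J₂) :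
    IsTJoin G (T₁ ∆ T₂) (J₁ ∆ J₂) := by
  refine ⟨fun e he => he.elim (fun h => h₁.1 h.1) (fun h => h₂.1 h.1), fun v => ?_⟩
  have hsep : {e ∈ J₁ ∆ J₂ | v ∈ e} = {e ∈ J₁ | v ∈ e} ∆ {e ∈ J₂ | v ∈ e} :=
    Set.inter_symmDiff_distrib_right _ _ _
  rw [hsep, Set.odd_ncard_symmDiff_iff (Set.toFinite _) (Set.toFinite _), h₁.2, h₂.2,
    Set.mem_symmDiff]
  tauto

theorem IsEvenEdgeSet.symmDiff [Finite V] (h₁ : IsEvenEdgeSet G H₁) (h₂ : IsEvenEdgeSet G H₂) :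
    IsEvenEdgeSet G (H₁ ∆ H₂) := by
  simpa using (isTJoin_empty_iff.mpr h₁).symmDiff (isTJoin_empty_iff.mpr h₂)

end TJoin

section Walks

variable {G : SimpleGraph V} {u v : V}

theorem SimpleGraph.Walk.IsTrail.ncard_incident_eq_countP [DecidableEq V] {p : G.Walk u v}
    (hp : p.IsTrail) (x : V) :
    {e ∈ {e | e ∈ p.edges} | x ∈ e}.ncard = p.edges.countP (x ∈ ·) := by
  have h : {e ∈ {e | e ∈ p.edges} | x ∈ e} = ↑(p.edges.filter (x ∈ ·)).toFinset := by
    ext; simp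
  rw [h, Set.ncard_coe_finset, List.toFinset_card_of_nodup (hp.edges_nodup.filter _),
    List.countP_eq_length_filter]

theorem SimpleGraph.Walk.IsTrail.isTJoin_pair {p : G.Walk u v} (hp : p.IsTrail) (huv : u ≠ v) :
    IsTJoin G {u, v} {e | e ∈ p.edges} := by
  classical
  refine ⟨fun e he => p.edges_subset_edgeSet he, fun x => ?_⟩
  rw [hp.ncard_incident_eq_countP, ← Nat.not_even_iff_odd, hp.even_countP_edges_iff]
  simp [huv]
  tauto

theorem SimpleGraph.Walk.IsTrail.isEvenEdgeSet {p : G.Walk u u} (hp : p.IsTrail) :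
    IsEvenEdgeSet G {e | e ∈ p.edges} := by
  classical
  refine ⟨fun e he => p.edges_subset_edgeSet he, fun x => ?_⟩
  rw [hp.ncard_incident_eq_countP, hp.even_countP_edges_iff]
  simp

end Walks

theorem SimpleGraph.Connected.exists_isTJoin [Finite V] {G : SimpleGraph V} (hG : G.Connected)
    {T : Set V} (hT : Even T.ncard) : ∃ J, IsTJoin G T J := by
  induction h : T.ncard using Nat.strong_induction_on generalizing T with
  | _ n ih =>
    rcases n.eq_zero_or_pos with rfl | hn
    · exact ⟨∅, by simp [(Set.ncard_eq_zero).mp h, IsEvenEdgeSet]⟩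
    have hlt : 1 < T.ncard := by rw [Nat.even_iff] at hT; omega
    obtain ⟨u, v, hu, hv, huv⟩ := (Set.one_lt_ncard_iff).mp hlt
    have hpair : {u, v} ⊆ T := Set.pair_subset hu hv
    have hcard : (T \ {u, v}).ncard = n - 2 := by
      rw [Set.ncard_sdiff hpair, Set.ncard_pair huv, h]
    obtain ⟨J, hJ⟩ := ih (n - 2) (by omega) (hcard ▸ (h ▸ hT).tsub even_two) hcard
    obtain ⟨p, hp⟩ := hG.exists_isPath u v
    have hJp := hJ.symmDiff (hp.isTrail.isTJoin_pair huv)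
    rw [sdiff_symmDiff_eq_sup, sup_eq_left.mpr hpair] at hJp
    exact ⟨_, hJp⟩

theorem Finset.odd_card_filter_mem_sym2_iff [DecidableEq V] (K : Finset V) {a b : V}
    (hab : a ≠ b) : Odd #{v ∈ K | v ∈ s(a, b)} ↔ ¬(a ∈ K ↔ b ∈ K) := by
  have h : {v ∈ K | v ∈ s(a, b)} = K ∩ {a, b} := by
    ext; simp [Sym2.mem_iff, and_comm]
  rw [h]
  by_cases ha : a ∈ K <;> by_cases hb : b ∈ K <;>
    simp [Finset.inter_insert_of_mem, Finset.inter_insert_of_notMem, ha, hb, hab]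

/-- Summing the degrees in `H` over the side `K` of a bridge `e` counts every other edge of `H`
zero or two times, but `e` once. -/
theorem IsEvenEdgeSet.not_isBridge [Fintype V] {G : SimpleGraph V} {H : Set (Sym2 V)}
    (hH : IsEvenEdgeSet G H) {e : Sym2 V} (he : e ∈ H) : ¬G.IsBridge e := by
  classical
  induction e using Sym2.ind with | h x y => ?_
  intro hb
  let K : Finset V := {v | (G.deleteEdges {s(x, y)}).Reachable x v}
  let Hf : Finset (Sym2 V) := H.toFinite.toFinset
  have hdeg : ∀ v, Even #{f ∈ Hf | v ∈ f} := by
    intro v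
    convert hH.2 v using 1
    rw [← Set.ncard_coe_finset]
    congr 1
    ext; simp [Hf]
  have hodd : ∀ f ∈ Hf, Odd #{v ∈ K | v ∈ f} ↔ f = s(x, y) := by
    intro f hf
    induction f using Sym2.ind with | h a b => ?_
    have hadj : G.Adj a b := hH.1 (by simpa [Hf] using hf)
    rw [K.odd_card_filter_mem_sym2_iff hadj.ne]
    by_cases hfe : s(a, b) = s(x, y)
    · have hxK : x ∈ K := by simp [K]
      have hyK : y ∉ K := by simpa [K] using isBridge_iff.mp hb
      simp only [hfe, iff_true]
      rcases Sym2.eq_iff.mp hfe with ⟨rfl, rfl⟩ | ⟨rfl, rfl⟩ <;> tauto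
    · have hadj' : (G.deleteEdges {s(x, y)}).Adj a b := by simp [hadj, hfe]
      simp only [hfe, iff_false, not_not, K, Finset.mem_filter, Finset.mem_univ, true_and]
      exact ⟨fun h => h.trans hadj'.reachable, fun h => h.trans hadj'.symm.reachable⟩
  have hsum : ∑ v ∈ K, #{f ∈ Hf | v ∈ f} = ∑ f ∈ Hf, #{v ∈ K | v ∈ f} :=
    Finset.sum_card_bipartiteAbove_eq_sum_card_bipartiteBelow (fun v f => v ∈ f)
  have heven : Even (∑ f ∈ Hf, #{v ∈ K | v ∈ f}) :=
    hsum ▸ Finset.even_sum _ fun v _ => hdeg v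
  rw [← Nat.not_odd_iff_even, Finset.odd_sum_iff_odd_card_odd, Finset.filter_congr hodd,
    Finset.filter_eq', if_pos (by simpa [Hf] using he)] at heven
  exact heven odd_one

theorem SimpleGraph.exists_isCycle_of_mem_nonBridgeEdges {G : SimpleGraph V} {e : Sym2 V}
    (he : e ∈ nonBridgeEdges G) : ∃ (u : V) (p : G.Walk u u), p.IsCycle ∧ e ∈ p.edges := by
  simpa [isBridge_iff_forall_cycle_notMem he.1] using he.2

section Averaging

variable {α : Type*}

open Classical in
theorem Finset.two_mul_card_filter_mem_eq_card {𝔈 : Finset (Set α)} {C : Set α}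
    (hC : ∀ H ∈ 𝔈, H ∆ C ∈ 𝔈) {a : α} (ha : a ∈ C) : 2 * #{H ∈ 𝔈 | a ∈ H} = #𝔈 := by
  have hmem : ∀ H : Set α, a ∈ H ∆ C ↔ a ∉ H := fun H => by
    simp [Set.mem_symmDiff, ha]
  have hswap : #{H ∈ 𝔈 | a ∈ H} = #{H ∈ 𝔈 | a ∉ H} := by
    refine Finset.card_bij' (fun H _ => H ∆ C) (fun H _ => H ∆ C) ?_ ?_ ?_ ?_ <;>
      simp_all [symmDiff_symmDiff_cancel_right]
  have := Finset.card_filter_add_card_filter_not (s := 𝔈) (fun H => a ∈ H)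
  omega

open Classical in
theorem Finset.sum_ncard_inter_eq_sum_card_filter_mem (𝔈 : Finset (Set α)) {S : Set α}
    (hS : S.Finite) : ∑ H ∈ 𝔈, (H ∩ S).ncard = ∑ a ∈ hS.toFinset, #{H ∈ 𝔈 | a ∈ H} := by
  have h : ∀ H : Set α, (H ∩ S).ncard = #{a ∈ hS.toFinset | a ∈ H} := fun H => by
    rw [← Set.ncard_coe_finset]
    congr 1
    ext; simp [and_comm]
  simp_rw [h]
  exact Finset.sum_card_bipartiteAbove_eq_sum_card_bipartiteBelow (fun H a => a ∈ H)

open Classical in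
theorem Set.ncard_inter_le_ncard_sdiff_of_average (𝔈 : Finset (Set α)) {J N : Set α}
    (hN : N.Finite) (h𝔈 : 𝔈.Nonempty) (hsub : ∀ H ∈ 𝔈, H ⊆ N)
    (hhalf : ∀ a ∈ N, 2 * #{H ∈ 𝔈 | a ∈ H} = #𝔈)
    (hJ : ∀ H ∈ 𝔈, (H ∩ J).ncard ≤ (H \ J).ncard) : (J ∩ N).ncard ≤ (N \ J).ncard := by
  have hsum : ∀ S ⊆ N, 2 * ∑ H ∈ 𝔈, (H ∩ S).ncard = S.ncard * #𝔈 := by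
    intro S hS
    rw [Finset.sum_ncard_inter_eq_sum_card_filter_mem 𝔈 (hN.subset hS), Finset.mul_sum,
      Finset.sum_congr rfl fun a ha => hhalf a (hS ((hN.subset hS).mem_toFinset.mp ha)),
      Finset.sum_const, smul_eq_mul, ← Set.ncard_eq_toFinset_card S (hN.subset hS)]
  have hin : ∀ H ∈ 𝔈, H ∩ J = H ∩ (J ∩ N) := fun H hH => by
    rw [← Set.inter_assoc, Set.inter_right_comm, Set.inter_eq_left.mpr (hsub H hH)]
  have hout : ∀ H ∈ 𝔈, H \ J = H ∩ (N \ J) := fun H hH => by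
    rw [← Set.inter_sdiff_assoc, Set.inter_eq_left.mpr (hsub H hH)]
  refine Nat.le_of_mul_le_mul_right ?_ h𝔈.card_pos
  calc (J ∩ N).ncard * #𝔈 = 2 * ∑ H ∈ 𝔈, (H ∩ J).ncard := by
        rw [← hsum _ Set.inter_subset_right,
          Finset.sum_congr rfl fun H hH => congrArg Set.ncard (hin H hH)]
    _ ≤ 2 * ∑ H ∈ 𝔈, (H \ J).ncard := Nat.mul_le_mul_left 2 (Finset.sum_le_sum hJ)
    _ = (N \ J).ncard * #𝔈 := by
        rw [← hsum _ Set.sdiff_subset,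
          Finset.sum_congr rfl fun H hH => congrArg Set.ncard (hout H hH)]

end Averaging

section MinimumTJoin

variable {G : SimpleGraph V} {T : Set V} {J H : Set (Sym2 V)}

theorem IsTJoin.ncard_inter_le_ncard_sdiff_of_minimal [Finite V] (hJ : IsTJoin G T J)
    (hmin : ∀ J', IsTJoin G T J' → J.ncard ≤ J'.ncard) (hH : IsEvenEdgeSet G H) :
    (H ∩ J).ncard ≤ (H \ J).ncard := by
  have hle := hmin (J ∆ H) (by
    simpa only [← Set.bot_eq_empty, symmDiff_bot] using hJ.symmDiff (isTJoin_empty_iff.mpr hH))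
  have hsymm := Set.ncard_symmDiff_add_two_mul_ncard_inter (Set.toFinite J) (Set.toFinite H)
  have hsplit := Set.ncard_inter_add_ncard_sdiff_eq_ncard H J
  rw [Set.inter_comm] at hsplit
  rw [Set.inter_comm]
  omega

theorem IsTJoin.two_mul_ncard_add_ncard_nonBridgeEdges_le [Fintype V] (hJ : IsTJoin G T J)
    (hmin : ∀ J', IsTJoin G T J' → J.ncard ≤ J'.ncard) :
    2 * J.ncard + (nonBridgeEdges G).ncard ≤ 2 * G.edgeSet.ncard := by
  classical
  let 𝔈 := (Set.toFinite {H | IsEvenEdgeSet G H}).toFinset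
  have hmem : ∀ H, H ∈ 𝔈 ↔ IsEvenEdgeSet G H := by simp [𝔈]
  have hhalf : ∀ e ∈ nonBridgeEdges G, 2 * #{H ∈ 𝔈 | e ∈ H} = #𝔈 := by
    intro e he
    obtain ⟨u, p, hp, hep⟩ := exists_isCycle_of_mem_nonBridgeEdges he
    refine Finset.two_mul_card_filter_mem_eq_card (fun H hH => ?_) (C := {e | e ∈ p.edges}) hep
    exact (hmem _).mpr (((hmem H).mp hH).symmDiff hp.isTrail.isEvenEdgeSet)
  have hnonBridge : (J ∩ nonBridgeEdges G).ncard ≤ (nonBridgeEdges G \ J).ncard :=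
    Set.ncard_inter_le_ncard_sdiff_of_average 𝔈 (Set.toFinite _)
      ⟨∅, (hmem ∅).mpr ⟨Set.empty_subset _, by simp⟩⟩
      (fun H hH e he => ⟨((hmem H).mp hH).1 he, ((hmem H).mp hH).not_isBridge he⟩) hhalf
      (fun H hH => hJ.ncard_inter_le_ncard_sdiff_of_minimal hmin ((hmem H).mp hH))
  have hJ_split := Set.ncard_inter_add_ncard_sdiff_eq_ncard J (nonBridgeEdges G)
  have hN_split := Set.ncard_inter_add_ncard_sdiff_eq_ncard (nonBridgeEdges G) J
  have hbridges : (J \ nonBridgeEdges G).ncard ≤ (G.edgeSet \ nonBridgeEdges G).ncard :=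
    Set.ncard_le_ncard (Set.sdiff_subset_sdiff_left hJ.1)
  have hE_split := Set.ncard_sdiff_add_ncard_of_subset (s := nonBridgeEdges G)
    (t := G.edgeSet) fun e he => he.1
  rw [Set.inter_comm] at hN_split
  omega

end MinimumTJoin

/-- a connected graph with `|T|` even has a `T`-join `J` with
`2|J| ≤ 2|E(G)| − |E(Ĝ)|`; in particular a minimum `T`-join has at most
`|E(G)| − |E(Ĝ)|/2` edges. -/
theorem stmt0 {V : Type*} [Fintype V] (G : SimpleGraph V) (T : Set V)
    (hG : G.Connected) (hT : Even T.ncard) :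
    (∃ J : Set (Sym2 V), IsTJoin G T J ∧
      2 * J.ncard + (nonBridgeEdges G).ncard ≤ 2 * G.edgeSet.ncard) ∧
    ∀ J : Set (Sym2 V), IsTJoin G T J →
      (∀ J' : Set (Sym2 V), IsTJoin G T J' → J.ncard ≤ J'.ncard) →
      2 * J.ncard + (nonBridgeEdges G).ncard ≤ 2 * G.edgeSet.ncard := by
  refine ⟨?_, fun J hJ hmin => hJ.two_mul_ncard_add_ncard_nonBridgeEdges_le hmin⟩
  obtain ⟨J₀, hJ₀⟩ := hG.exists_isTJoin hT
  obtain ⟨J, hJ, hmin⟩ :=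
    Set.exists_min_image {J | IsTJoin G T J} Set.ncard (Set.toFinite _) ⟨J₀, hJ₀⟩
  exact ⟨J, hJ, hJ.two_mul_ncard_add_ncard_nonBridgeEdges_le hmin⟩
end

section
/- Let (G,σ) be a signed graph such that G⁺ is connected. Then for every set S ⊆ E⁻(G,σ) there exists an even subgraph H of G with S ⊆ E(H) ⊆ E(G⁺) ∪ S and 2|E(H)| ≤ 2|E(G)| − |E(Ĝ⁺)|, where Ĝ⁺ is the maximal bridgeless subgraph of G⁺. -/
open SimpleGraph Set

variable {V : Type*}

/-!
Let `T` be the set of vertices of odd degree in `S`. Replacing every edge `xy` of `S` by an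
`x`–`y` path of the connected graph `G⁺` yields `J ⊆ E(G⁺)` with the same odd-degree vertices,
so `S ∪ (J ∆ C)` is even for every even subgraph `C` of `G⁺`. Average over the cycle space `Z` of
`G⁺`: an edge `e` of `Ĝ⁺` lies on a cycle `C₀ ∈ Z`, and `C ↦ C ∆ C₀` is an involution of `Z`
exchanging the `C` with `e ∈ J ∆ C` and those without, so `e` lies in exactly half of the sets
`J ∆ C`. Hence some `C ∈ Z` has `|J ∆ C| ≤ |E(G⁺)| - |E(Ĝ⁺)| / 2`, and
`|S| ≤ |E(G)| - |E(G⁺)|` finishes the count.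
-/

open Finset
open scoped symmDiff

namespace Finset

variable {α : Type*} [DecidableEq α]

theorem card_symmDiff_add_two_mul_card_inter (s t : Finset α) :
    #(s ∆ t) + 2 * #(s ∩ t) = #s + #t := by
  rw [symmDiff_eq_sup_sdiff_inf, card_sdiff_of_subset inf_le_sup]
  have := card_union_add_card_inter s t
  have := card_le_card (inf_le_sup : s ∩ t ⊆ s ∪ t)
  simp only [sup_eq_union, inf_eq_inter] at *
  omega

theorem even_card_symmDiff_iff (s t : Finset α) : Even #(s ∆ t) ↔ (Even #s ↔ Even #t) := by
  rw [← Nat.even_add, ← card_symmDiff_add_two_mul_card_inter]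
  simp [Nat.even_add]

theorem filter_symmDiff (p : α → Prop) [DecidablePred p] (s t : Finset α) :
    (s ∆ t).filter p = s.filter p ∆ t.filter p := by
  ext a
  simp only [Finset.mem_filter, Finset.mem_symmDiff]
  tauto

end Finset

section Averaging

variable {α : Type*} [DecidableEq α] {Z : Finset (Finset α)}

theorem two_mul_card_filter_mem_symmDiff (hZ : ∀ C ∈ Z, ∀ D ∈ Z, C ∆ D ∈ Z) {C₀ : Finset α}
    (hC₀ : C₀ ∈ Z) {e : α} (he : e ∈ C₀) (J : Finset α) :
    2 * #{C ∈ Z | e ∈ J ∆ C} = #Z := by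
  have hflip : ∀ C : Finset α, e ∈ J ∆ (C ∆ C₀) ↔ e ∉ J ∆ C := by
    intro C
    simp only [Finset.mem_symmDiff]
    tauto
  have hhalf : #{C ∈ Z | e ∈ J ∆ C} = #{C ∈ Z | e ∉ J ∆ C} := by
    refine card_nbij' (· ∆ C₀) (· ∆ C₀) ?_ ?_ ?_ ?_
    · intro C hC
      simp only [coe_filter, Set.mem_ofPred_eq] at hC ⊢
      exact ⟨hZ _ hC.1 _ hC₀, fun h => (hflip C).1 h hC.2⟩
    · intro C hC
      simp only [coe_filter, Set.mem_ofPred_eq] at hC ⊢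
      exact ⟨hZ _ hC.1 _ hC₀, (hflip C).2 hC.2⟩
    all_goals exact fun C _ => symmDiff_symmDiff_cancel_right C₀ C
  have := card_filter_add_card_filter_not (s := Z) (fun C => e ∈ J ∆ C)
  omega

theorem exists_two_mul_card_symmDiff_add_card_le (hZne : Z.Nonempty)
    (hZ : ∀ C ∈ Z, ∀ D ∈ Z, C ∆ D ∈ Z) {E N J : Finset α} (hJ : J ⊆ E) (hZE : ∀ C ∈ Z, C ⊆ E)
    (hN : ∀ e ∈ N, ∃ C ∈ Z, e ∈ C) :
    ∃ C ∈ Z, 2 * #(J ∆ C) + #N ≤ 2 * #E := by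
  set cnt : α → ℕ := fun e => #{C ∈ Z | e ∈ J ∆ C}
  have hNE : N ⊆ E := fun e he => by
    obtain ⟨C, hC, heC⟩ := hN e he
    exact hZE C hC heC
  have hdouble : ∑ C ∈ Z, #(J ∆ C) = ∑ e ∈ E, cnt e := by
    refine (sum_congr rfl fun C hC => ?_).trans
      (sum_card_bipartiteAbove_eq_sum_card_bipartiteBelow (r := fun C e => e ∈ J ∆ C))
    rw [bipartiteAbove, filter_mem_eq_inter,
      inter_eq_right.2 (symmDiff_subset_union.trans (union_subset hJ (hZE C hC)))]
  have hbound : 2 * ∑ e ∈ E, cnt e ≤ #Z * (#N + 2 * #(E \ N)) := by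
    rw [mul_sum, ← sum_sdiff hNE, mul_add, add_comm]
    gcongr
    · rw [sum_congr rfl fun e he => ?_, sum_const, smul_eq_mul, mul_comm]
      obtain ⟨C, hC, heC⟩ := hN e he
      exact two_mul_card_filter_mem_symmDiff hZ hC heC J
    · calc ∑ e ∈ E \ N, 2 * cnt e ≤ ∑ e ∈ E \ N, 2 * #Z :=
            sum_le_sum fun e _ => by gcongr; exact card_filter_le _ _
        _ = #Z * (2 * #(E \ N)) := by rw [sum_const, smul_eq_mul]; ring
  have hE : #E = #N + #(E \ N) := by
    rw [card_sdiff_of_subset hNE]; have := Finset.card_le_card hNE; omega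
  refine exists_le_of_sum_le hZne ?_
  rw [sum_add_distrib, ← mul_sum, hdouble, sum_const, sum_const, smul_eq_mul, smul_eq_mul, hE]
  nlinarith

end Averaging

section EvenDegrees

variable [DecidableEq V]

def EvenDegrees (A : Finset (Sym2 V)) : Prop := ∀ v, Even #{e ∈ A | v ∈ e}

theorem evenDegrees_empty : EvenDegrees (∅ : Finset (Sym2 V)) := fun v => by simp

theorem EvenDegrees.symmDiff {A B : Finset (Sym2 V)} (hA : EvenDegrees A) (hB : EvenDegrees B) :
    EvenDegrees (A ∆ B) := fun v => by
  rw [filter_symmDiff, even_card_symmDiff_iff]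
  exact iff_of_true (hA v) (hB v)

theorem isEvenEdgeSet_coe_iff {G : SimpleGraph V} {A : Finset (Sym2 V)} :
    IsEvenEdgeSet G ↑A ↔ ↑A ⊆ G.edgeSet ∧ EvenDegrees A := by
  simp only [IsEvenEdgeSet, EvenDegrees, ← ncard_coe_finset, Finset.coe_filter, Finset.mem_coe]

namespace SimpleGraph.Walk

variable {G : SimpleGraph V}

theorem IsTrail.even_card_filter_mem_edges_iff {u v : V} {p : G.Walk u v} (ht : p.IsTrail)
    (x : V) : Even #{e ∈ p.edges.toFinset | x ∈ e} ↔ (u ≠ v → x ≠ u ∧ x ≠ v) := by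
  rw [← ht.even_countP_edges_iff, List.countP_eq_length_filter,
    ← List.toFinset_card_of_nodup (ht.edges_nodup.filter _), List.toFinset_filter]
  simp only [decide_eq_true_eq]

theorem IsCycle.evenDegrees_edges {u : V} {p : G.Walk u u} (hp : p.IsCycle) :
    EvenDegrees p.edges.toFinset :=
  fun x => (hp.isTrail.even_card_filter_mem_edges_iff x).2 fun h => (h rfl).elim

theorem IsTrail.evenDegrees_singleton_symmDiff_edges {u v : V} {p : G.Walk u v} (ht : p.IsTrail)
    (huv : u ≠ v) : EvenDegrees ({s(u, v)} ∆ p.edges.toFinset) := fun x => by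
  rw [filter_symmDiff, even_card_symmDiff_iff, ht.even_card_filter_mem_edges_iff, filter_singleton]
  grind

end SimpleGraph.Walk

theorem SimpleGraph.Connected.exists_evenDegrees_symmDiff {G : SimpleGraph V} (hG : G.Connected)
    (A : Finset (Sym2 V)) (hA : ∀ e ∈ A, ¬ e.IsDiag) :
    ∃ J : Finset (Sym2 V), ↑J ⊆ G.edgeSet ∧ EvenDegrees (A ∆ J) := by
  induction A using Finset.induction_on with
  | empty => exact ⟨∅, by simp, by simpa using evenDegrees_empty⟩
  | insert e A heA ih =>
    obtain ⟨J, hJG, hAJ⟩ := ih fun e' he' => hA e' (mem_insert_of_mem he')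
    have he := hA e (mem_insert_self e A)
    induction e using Sym2.ind with | h x y => ?_
    obtain ⟨p⟩ := hG.preconnected x y
    have hp := p.toPath.2.isTrail
    refine ⟨(p.toPath : G.Walk x y).edges.toFinset ∆ J, ?_, ?_⟩
    · rw [coe_symmDiff]
      refine Set.symmDiff_subset_union.trans (Set.union_subset (fun e he => ?_) hJG)
      exact Walk.edges_subset_edgeSet _ (List.mem_toFinset.1 he)
    · rw [Finset.insert_eq, ← symmDiff_eq_union (disjoint_singleton_left.2 heA),
        symmDiff_symmDiff_symmDiff_comm]
      exact (hp.evenDegrees_singleton_symmDiff_edges (by simpa using he)).symmDiff hAJ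

end EvenDegrees

section CycleSpace

variable [DecidableEq V] (G : SimpleGraph V) [Fintype G.edgeSet]

open Classical in
noncomputable def SimpleGraph.cycleSpace : Finset (Finset (Sym2 V)) :=
  {C ∈ G.edgeFinset.powerset | EvenDegrees C}

variable {G}

namespace SimpleGraph

theorem mem_cycleSpace {C : Finset (Sym2 V)} :
    C ∈ G.cycleSpace ↔ C ⊆ G.edgeFinset ∧ EvenDegrees C := by
  simp [cycleSpace]

theorem empty_mem_cycleSpace : ∅ ∈ G.cycleSpace :=
  mem_cycleSpace.2 ⟨Finset.empty_subset _, evenDegrees_empty⟩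

theorem symmDiff_mem_cycleSpace {C D : Finset (Sym2 V)} (hC : C ∈ G.cycleSpace)
    (hD : D ∈ G.cycleSpace) : C ∆ D ∈ G.cycleSpace := by
  rw [mem_cycleSpace] at *
  exact ⟨symmDiff_subset_union.trans (union_subset hC.1 hD.1), hC.2.symmDiff hD.2⟩

theorem exists_mem_cycleSpace_of_not_isBridge {e : Sym2 V} (he : e ∈ G.edgeSet)
    (hb : ¬ G.IsBridge e) : ∃ C ∈ G.cycleSpace, e ∈ C := by
  rw [isBridge_iff_forall_cycle_notMem he] at hb
  push Not at hb
  obtain ⟨u, p, hp, hep⟩ := hb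
  refine ⟨p.edges.toFinset, mem_cycleSpace.2 ⟨fun f hf => ?_, hp.evenDegrees_edges⟩,
    List.mem_toFinset.2 hep⟩
  exact mem_edgeFinset.2 (p.edges_subset_edgeSet (List.mem_toFinset.1 hf))

end SimpleGraph

end CycleSpace

theorem SimpleGraph.Connected.exists_evenDegrees_symmDiff_card_le [Finite V] [DecidableEq V]
    {G : SimpleGraph V} (hG : G.Connected) (A : Finset (Sym2 V)) (hA : ∀ e ∈ A, ¬ e.IsDiag) :
    ∃ K : Finset (Sym2 V), ↑K ⊆ G.edgeSet ∧ EvenDegrees (A ∆ K) ∧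
      2 * #K + (nonBridgeEdges G).ncard ≤ 2 * G.edgeSet.ncard := by
  have : Fintype G.edgeSet := Fintype.ofFinite _
  classical
  obtain ⟨J, hJG, hAJ⟩ := hG.exists_evenDegrees_symmDiff A hA
  have hJ : J ⊆ G.edgeFinset := by rwa [← Finset.coe_subset, coe_edgeFinset]
  obtain ⟨C, hC, hle⟩ := exists_two_mul_card_symmDiff_add_card_le
    (N := {e ∈ G.edgeFinset | ¬ G.IsBridge e}) ⟨∅, empty_mem_cycleSpace⟩
    (fun _ hC _ hD => symmDiff_mem_cycleSpace hC hD) hJ (fun C hC => (mem_cycleSpace.1 hC).1)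
    fun e he => by
      rw [Finset.mem_filter, mem_edgeFinset] at he
      exact exists_mem_cycleSpace_of_not_isBridge he.1 he.2
  obtain ⟨hCE, hCeven⟩ := mem_cycleSpace.1 hC
  refine ⟨J ∆ C, ?_, by rw [← symmDiff_assoc]; exact hAJ.symmDiff hCeven, ?_⟩
  · rw [← coe_edgeFinset, Finset.coe_subset]
    exact symmDiff_subset_union.trans (union_subset hJ hCE)
  · have hNB : nonBridgeEdges G = ↑{e ∈ G.edgeFinset | ¬ G.IsBridge e} := by
      ext e; simp [nonBridgeEdges]
    rwa [hNB, ncard_coe_finset, ← coe_edgeFinset, ncard_coe_finset]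

section Signed

variable (G : SimpleGraph V) (σ : Sym2 V → Bool)

theorem edgeSet_gplus : (gplus G σ).edgeSet = posEdgeSet G σ := by
  ext e
  simp [gplus, posEdgeSet]

theorem negEdgeSet_subset_edgeSet : negEdgeSet G σ ⊆ G.edgeSet := Set.sep_subset _ _

theorem posEdgeSet_subset_edgeSet : posEdgeSet G σ ⊆ G.edgeSet := Set.sep_subset _ _

theorem disjoint_negEdgeSet_posEdgeSet : Disjoint (negEdgeSet G σ) (posEdgeSet G σ) :=
  Set.disjoint_left.2 fun e hneg hpos => by simp_all [negEdgeSet, posEdgeSet]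

variable {G σ}

theorem ncard_add_ncard_posEdgeSet_le [Finite V] {S : Set (Sym2 V)} (hS : S ⊆ negEdgeSet G σ) :
    S.ncard + (posEdgeSet G σ).ncard ≤ G.edgeSet.ncard := by
  rw [← ncard_union_eq ((disjoint_negEdgeSet_posEdgeSet G σ).mono_left hS)]
  exact ncard_le_ncard (union_subset (hS.trans (negEdgeSet_subset_edgeSet G σ))
    (posEdgeSet_subset_edgeSet G σ))

end Signed

/-- if `G⁺` is connected then for every `S ⊆ E⁻(G,σ)` there is an even
subgraph `H` with `S ⊆ E(H) ⊆ E(G⁺) ∪ S` and `2|E(H)| ≤ 2|E(G)| − |E(Ĝ⁺)|`. -/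
theorem stmt2 {V : Type*} [Fintype V] (G : SimpleGraph V) (σ : Sym2 V → Bool)
    (hpos : (gplus G σ).Connected) (S : Set (Sym2 V)) (hS : S ⊆ negEdgeSet G σ) :
    ∃ H : Set (Sym2 V), IsEvenEdgeSet G H ∧ S ⊆ H ∧ H ⊆ posEdgeSet G σ ∪ S ∧
      2 * H.ncard + (nonBridgeEdges (gplus G σ)).ncard ≤ 2 * G.edgeSet.ncard := by
  classical
  obtain ⟨S, rfl⟩ := S.toFinite.exists_finset_coe
  obtain ⟨K, hKpos, hK, hcard⟩ := hpos.exists_evenDegrees_symmDiff_card_le S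
    fun e he => G.not_isDiag_of_mem_edgeSet (hS he).1
  rw [edgeSet_gplus] at hKpos hcard
  have hdisj : Disjoint S K :=
    Finset.disjoint_coe.1 ((disjoint_negEdgeSet_posEdgeSet G σ).mono hS hKpos)
  refine ⟨↑(S ∪ K), isEvenEdgeSet_coe_iff.2 ⟨?_, ?_⟩, by simp, ?_, ?_⟩
  · rw [coe_union]
    exact union_subset (hS.trans (negEdgeSet_subset_edgeSet G σ))
      (hKpos.trans (posEdgeSet_subset_edgeSet G σ))
  · rwa [← symmDiff_eq_union hdisj]
  · rw [coe_union, Set.union_comm]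
    exact Set.union_subset_union_left _ hKpos
  · have := ncard_add_ncard_posEdgeSet_le hS
    rw [ncard_coe_finset] at this ⊢
    rw [card_union_of_disjoint hdisj]
    omega
end

section
/- Let (G,σ) be a signed graph and let C and C' be edge-disjoint negative cycles of (G,σ) that share at least two vertices. Then the edge set E(C) ∪ E(C') can be partitioned into the edge sets of pairwise edge-disjoint cycles of G, at least one of which is a positive cycle of (G,σ). -/
open SimpleGraph Set

variable {V : Type*}

/-! Cut the second cycle `C'` at a common vertex `u` and follow it until it first returns to
`C`, at a vertex `v ≠ u`: this gives a path `q` whose interior avoids `C`. Together with either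
of the two arcs of `C` between `u` and `v` it closes up to a cycle, and the numbers of negative
edges of these two cycles add up to that of `C` plus twice that of `q`, which is odd; so one of
them, `D`, is positive. Every vertex has even degree in `C ∪ C'` and in `D`, hence in
`(C ∪ C') \ D`, and a finite edge set with all degrees even splits into edge-disjoint cycles
(repeatedly remove a cycle, found by extending a longest path). -/

lemma List.Nodup.ncard_sep_mem {α : Type*} {l : List α} (hl : l.Nodup) (P : α → Prop)
    [DecidablePred P] : {x ∈ {x | x ∈ l} | P x}.ncard = l.countP (fun x => decide (P x)) := by
  classical
  have : {x ∈ {x | x ∈ l} | P x} = ↑(l.filter (fun x => decide (P x))).toFinset := by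
    ext x; simp
  rw [this, Set.ncard_coe_finset, List.toFinset_card_of_nodup (hl.filter _),
    List.countP_eq_length_filter]

lemma List.Nodup.ncard_setOf_mem {α : Type*} {l : List α} (hl : l.Nodup) :
    {x | x ∈ l}.ncard = l.length := by
  classical
  rw [← List.coe_toFinset, Set.ncard_coe_finset, List.toFinset_card_of_nodup hl]

namespace SimpleGraph.Walk

variable {G : SimpleGraph V}

lemma IsTrail.isEvenEdgeSet_s11 {u : V} {c : G.Walk u u} (hc : c.IsTrail) :
    IsEvenEdgeSet G {e | e ∈ c.edges} := by
  classical
  refine ⟨fun e he => c.edges_subset_edgeSet he, fun v => ?_⟩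
  rw [hc.edges_nodup.ncard_sep_mem]
  exact (hc.even_countP_edges_iff v).mpr fun h => absurd rfl h

lemma exists_eq_append_of_end_mem {S : Set V} {a b : V} (p : G.Walk a b) (hb : b ∈ S)
    (hp : ¬ p.Nil) :
    ∃ (v : V) (q : G.Walk a v) (r : G.Walk v b), p = q.append r ∧ v ∈ S ∧ ¬ q.Nil ∧
      ∀ x ∈ q.support, x ∈ S → x = a ∨ x = v := by
  induction p with
  | nil => exact absurd Nil.nil hp
  | @cons a c b h p ih =>
    by_cases hc : c ∈ S
    · refine ⟨c, .cons h .nil, p, (cons_nil_append h p).symm, hc, not_nil_cons, ?_⟩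
      simp only [support_cons, support_nil, List.mem_cons, List.not_mem_nil, or_false]
      tauto
    · obtain ⟨v, q, r, rfl, hv, hq, hqS⟩ := ih hb fun hnil => hc (hnil.eq ▸ hb)
      refine ⟨v, .cons h q, r, (cons_append h q r).symm, hv, not_nil_cons, ?_⟩
      intro x hx hxS
      rcases List.mem_cons.mp hx with rfl | hx
      · exact Or.inl rfl
      · exact (hqS x hx hxS).imp (fun hxc => absurd (hxc ▸ hxS) hc) id

lemma IsPath.isCycle_append_reverse {u v : V} {p q : G.Walk u v} (hp : p.IsPath)
    (hq : q.IsPath) (huv : u ≠ v) (hE : p.edges.Disjoint q.edges)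
    (hV : ∀ x ∈ p.support, x ∈ q.support → x = u ∨ x = v) :
    (p.append q.reverse).IsCycle := by
  rw [isCycle_def, isTrail_append, tail_support_append, List.nodup_append']
  refine ⟨⟨hp.isTrail, hq.reverse.isTrail, by simpa [edges_reverse] using hE⟩, ?_,
    hp.support_nodup.tail, hq.reverse.support_nodup.tail, ?_⟩
  · intro h
    have := congrArg length h
    rw [length_append, length_nil] at this
    exact huv (eq_of_length_eq_zero (by omega : p.length = 0))
  · intro x hxp hxq
    have hxq' : x ∈ q.support := by simpa using List.mem_of_mem_tail hxq
    rcases hV x (List.mem_of_mem_tail hxp) hxq' with rfl | rfl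
    · exact (List.nodup_cons.mp (p.cons_tail_support ▸ hp.support_nodup)).1 hxp
    · exact (List.nodup_cons.mp
        (q.reverse.cons_tail_support ▸ hq.reverse.support_nodup)).1 hxq

lemma IsCycle.exists_isCycle_even_countP {u v : V} {c : G.Walk u u} (hc : c.IsCycle)
    (hv : v ∈ c.support) (huv : u ≠ v) {q : G.Walk u v} (hq : q.IsPath)
    (hE : c.edges.Disjoint q.edges) (hV : ∀ x ∈ q.support, x ∈ c.support → x = u ∨ x = v)
    (f : Sym2 V → Bool) (hodd : Odd (c.edges.countP f)) :
    ∃ d : G.Walk u u, d.IsCycle ∧ (∀ e ∈ d.edges, e ∈ c.edges ∨ e ∈ q.edges) ∧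
      Even (d.edges.countP f) := by
  classical
  set p₁ := c.takeUntil v hv
  set p₂ := (c.dropUntil v hv).reverse
  have hsplit : c = p₁.append p₂.reverse := by simp [p₁, p₂, take_spec]
  have hp₁ : p₁.IsPath := hc.isPath_takeUntil hv
  have hp₂ : p₂.IsPath :=
    (IsCycle.isPath_of_append_right (p := p₁) (not_nil_of_ne huv)
      (by rwa [take_spec])).reverse
  have hcycle : ∀ p : G.Walk u v, p.IsPath → p.edges ⊆ c.edges → p.support ⊆ c.support →
      (p.append q.reverse).IsCycle ∧
        ∀ e ∈ (p.append q.reverse).edges, e ∈ c.edges ∨ e ∈ q.edges := by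
    intro p hp hpE hpV
    refine ⟨hp.isCycle_append_reverse hq huv (List.disjoint_of_subset_left hpE hE)
      fun x hx hxq => hV x hxq (hpV hx), ?_⟩
    intro e he
    simp only [edges_append, edges_reverse, List.mem_append, List.mem_reverse] at he
    exact he.imp_left (hpE ·)
  have hc₁ := hcycle p₁ hp₁ (c.edges_takeUntil_subset_edges hv)
    (c.support_takeUntil_subset_support hv)
  have hc₂ := hcycle p₂ hp₂
    (fun e he => c.edges_dropUntil_subset_edges hv (by simpa [p₂] using he))
    (fun x hx => c.support_dropUntil_subset_support hv (by simpa [p₂] using hx))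
  have hcount : c.edges.countP f = p₁.edges.countP f + p₂.edges.countP f := by
    rw [hsplit]; simp [List.countP_append, List.countP_reverse]
  by_cases h₁ : Even ((p₁.append q.reverse).edges.countP f)
  · exact ⟨_, hc₁.1, hc₁.2, h₁⟩
  · refine ⟨_, hc₂.1, hc₂.2, ?_⟩
    simp only [edges_append, edges_reverse, List.countP_append, List.countP_reverse]
      at h₁ ⊢
    rw [hcount] at hodd
    grind

end SimpleGraph.Walk

section CycleDecomposition

variable {G : SimpleGraph V}

lemma IsCycleSet.finite {C : Set (Sym2 V)} {S : Set V} (h : IsCycleSet G C S) : C.Finite := by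
  obtain ⟨u, c, -, rfl, -⟩ := h
  exact c.edges.finite_toSet

lemma IsCycleSet.isEvenEdgeSet_s11 {C : Set (Sym2 V)} {S : Set V} (h : IsCycleSet G C S) :
    IsEvenEdgeSet G C := by
  obtain ⟨u, c, hc, rfl, -⟩ := h
  exact hc.isTrail.isEvenEdgeSet_s11

lemma IsCycleSet.exists_walk_of_mem {C : Set (Sym2 V)} {S : Set V} (h : IsCycleSet G C S)
    {x : V} (hx : x ∈ S) :
    ∃ c : G.Walk x x, c.IsCycle ∧ C = {e | e ∈ c.edges} ∧ S = {y | y ∈ c.support} := by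
  classical
  obtain ⟨u, c, hc, rfl, rfl⟩ := h
  refine ⟨c.rotate x hx, hc.rotate hx, ?_, ?_⟩
  · ext e; exact (c.rotate_edges x hx).mem_iff.symm
  · ext y; exact (c.mem_support_rotate_iff x hx).symm

lemma IsEvenEdgeSet.union {H K : Set (Sym2 V)} (hH : IsEvenEdgeSet G H) (hK : IsEvenEdgeSet G K)
    (hHf : H.Finite) (hKf : K.Finite) (hdisj : Disjoint H K) : IsEvenEdgeSet G (H ∪ K) := by
  refine ⟨Set.union_subset hH.1 hK.1, fun v => ?_⟩
  have hsplit : {e ∈ H ∪ K | v ∈ e} = {e ∈ H | v ∈ e} ∪ {e ∈ K | v ∈ e} :=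
    Set.sep_union
  rw [hsplit, Set.ncard_union_eq (hdisj.mono (Set.sep_subset _ _) (Set.sep_subset _ _))
    (hHf.subset (Set.sep_subset _ _)) (hKf.subset (Set.sep_subset _ _))]
  exact (hH.2 v).add (hK.2 v)

lemma IsEvenEdgeSet.diff {H K : Set (Sym2 V)} (hH : IsEvenEdgeSet G H) (hK : IsEvenEdgeSet G K)
    (hKH : K ⊆ H) (hHf : H.Finite) : IsEvenEdgeSet G (H \ K) := by
  refine ⟨Set.sdiff_subset.trans hH.1, fun v => ?_⟩
  have hsub : {e ∈ K | v ∈ e} ⊆ {e ∈ H | v ∈ e} := fun e he => ⟨hKH he.1, he.2⟩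
  have hsplit : {e ∈ H \ K | v ∈ e} = {e ∈ H | v ∈ e} \ {e ∈ K | v ∈ e} := by
    ext e; simp only [Set.mem_ofPred_eq, Set.mem_sdiff]; tauto
  have hfin : {e ∈ H | v ∈ e}.Finite := hHf.subset (Set.sep_subset _ _)
  rw [hsplit, Set.ncard_sdiff' hsub hfin, Nat.even_sub (Set.ncard_le_ncard hsub hfin)]
  exact iff_of_true (hH.2 v) (hK.2 v)

lemma IsEvenEdgeSet.exists_adj_notMem_edges_of_isPath {H : Set (Sym2 V)}
    (hH : IsEvenEdgeSet G H) {a b : V} {p : G.Walk a b} (hp : p.IsPath)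
    (hpH : {e | e ∈ p.edges} ⊆ H) (hab : a ≠ b) :
    ∃ w, G.Adj b w ∧ s(b, w) ∈ H ∧ s(b, w) ∉ p.edges := by
  classical
  by_contra! hall
  -- `b` lies on an odd number of edges of `p` but on an even number of edges of `H`
  have hodd : ¬ Even {e ∈ {e | e ∈ p.edges} | b ∈ e}.ncard := by
    rw [hp.isTrail.edges_nodup.ncard_sep_mem, hp.isTrail.even_countP_edges_iff]
    simp [hab]
  have heq : {e ∈ H | b ∈ e} = {e ∈ {e | e ∈ p.edges} | b ∈ e} := by
    refine Set.Subset.antisymm (fun e ⟨heH, hbe⟩ => ⟨?_, hbe⟩)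
      (fun e ⟨hep, hbe⟩ => ⟨hpH hep, hbe⟩)
    obtain ⟨w, rfl⟩ := Sym2.mem_iff_exists.mp hbe
    exact hall w (hH.1 heH) heH
  exact hodd (heq ▸ hH.2 b)

lemma IsEvenEdgeSet.exists_isCycle {H : Set (Sym2 V)} (hH : IsEvenEdgeSet G H) (hHf : H.Finite)
    (hne : H.Nonempty) : ∃ (u : V) (c : G.Walk u u), c.IsCycle ∧ {e | e ∈ c.edges} ⊆ H := by
  classical
  set L : Set ℕ :=
    {n | ∃ (a b : V) (p : G.Walk a b), p.IsPath ∧ {e | e ∈ p.edges} ⊆ H ∧ p.length = n}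
  have hbdd : BddAbove L := by
    refine ⟨H.ncard, ?_⟩
    rintro n ⟨a, b, p, hp, hpH, rfl⟩
    rw [← p.length_edges, ← hp.isTrail.edges_nodup.ncard_setOf_mem]
    exact Set.ncard_le_ncard hpH hHf
  have h1 : 1 ∈ L := by
    obtain ⟨e, he⟩ := hne
    induction e using Sym2.ind with
    | _ x y =>
      have hxy : G.Adj x y := hH.1 he
      exact ⟨x, y, hxy.toWalk, hxy.isPath_toWalk, by simp [Adj.toWalk, he], rfl⟩
  obtain ⟨a, b, p, hp, hpH, hlen⟩ := Nat.sSup_mem ⟨1, h1⟩ hbdd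
  have hab : a ≠ b := by
    rw [Ne, ← hp.nil_iff_eq, Walk.not_nil_iff_lt_length, hlen]
    exact le_csSup hbdd h1
  obtain ⟨w, hbw, hwH, hwp⟩ := hH.exists_adj_notMem_edges_of_isPath hp hpH hab
  by_cases hw : w ∈ p.support
  · refine ⟨b, .cons hbw (p.dropUntil w hw), ?_, ?_⟩
    · exact (Walk.cons_isCycle_iff _ _).mpr
        ⟨hp.dropUntil hw, fun h => hwp (p.edges_dropUntil_subset_edges hw h)⟩
    · intro e he
      simp only [Set.mem_ofPred_eq, Walk.edges_cons, List.mem_cons] at he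
      rcases he with rfl | he
      · exact hwH
      · exact hpH (p.edges_dropUntil_subset_edges hw he)
  · -- a longest path cannot be extended
    have : p.length + 1 ∈ L := ⟨a, w, p.concat hbw, hp.concat hw hbw, by
      intro e he
      simp only [Set.mem_ofPred_eq, Walk.edges_concat, List.concat_eq_append, List.mem_append,
        List.mem_singleton] at he
      rcases he with he | rfl
      exacts [hpH he, hwH], p.length_concat hbw⟩
    have := le_csSup hbdd this
    omega

def IsCycleDecomposition (G : SimpleGraph V) (𝓟 : Finset (Set (Sym2 V))) (H : Set (Sym2 V)) :
    Prop :=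
  (∀ D ∈ 𝓟, ∃ SD : Set V, IsCycleSet G D SD) ∧
    (𝓟 : Set (Set (Sym2 V))).PairwiseDisjoint id ∧ (⋃ D ∈ 𝓟, D) = H

lemma IsCycleDecomposition.insert [DecidableEq (Set (Sym2 V))] {𝓟 : Finset (Set (Sym2 V))}
    {H D : Set (Sym2 V)} {SD : Set V} (h𝓟 : IsCycleDecomposition G 𝓟 (H \ D))
    (hD : IsCycleSet G D SD) (hDH : D ⊆ H) : IsCycleDecomposition G (insert D 𝓟) H := by
  obtain ⟨hcyc, hdisj, hunion⟩ := h𝓟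
  refine ⟨?_, ?_, ?_⟩
  · intro D' hD'
    rcases Finset.mem_insert.mp hD' with rfl | hD'
    exacts [⟨SD, hD⟩, hcyc D' hD']
  · rw [Finset.coe_insert]
    refine hdisj.insert fun D' hD' _ =>
      (disjoint_sdiff_right : Disjoint D (H \ D)).mono_right ?_
    exact hunion ▸ Set.subset_biUnion_of_mem (u := id) hD'
  · rw [Finset.set_biUnion_insert, hunion, Set.union_sdiff_cancel hDH]

theorem IsEvenEdgeSet.exists_isCycleDecomposition {H : Set (Sym2 V)} (hH : IsEvenEdgeSet G H)
    (hHf : H.Finite) : ∃ 𝓟, IsCycleDecomposition G 𝓟 H := by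
  classical
  induction hn : H.ncard using Nat.strong_induction_on generalizing H with
  | _ n ih =>
  rcases H.eq_empty_or_nonempty with rfl | hne
  · exact ⟨∅, by simp [IsCycleDecomposition]⟩
  obtain ⟨u, c, hc, hcH⟩ := hH.exists_isCycle hHf hne
  have hD : IsCycleSet G {e | e ∈ c.edges} {x | x ∈ c.support} := ⟨u, c, hc, rfl, rfl⟩
  have hlt : (H \ {e | e ∈ c.edges}).ncard < n := by
    rw [← hn]
    obtain ⟨e, he⟩ := List.exists_mem_of_ne_nil _ (Walk.edges_eq_nil.not.mpr hc.not_nil)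
    exact Set.ncard_lt_ncard (Set.sdiff_ssubset_left_iff.mpr ⟨e, hcH he, he⟩) hHf
  obtain ⟨𝓟, h𝓟⟩ := ih _ hlt (hH.diff hD.isEvenEdgeSet_s11 hcH hHf) hHf.sdiff rfl
  exact ⟨insert _ 𝓟, h𝓟.insert hD hcH⟩

theorem exists_isPosCycle_subset_union {σ : Sym2 V → Bool} {C C' : Set (Sym2 V)} {S S' : Set V}
    (hC : IsNegCycle G σ C S) (hC' : IsCycleSet G C' S') (hdisj : Disjoint C C')
    (hshare : 2 ≤ (S ∩ S').ncard) : ∃ D, IsPosCycle G σ D ∧ D ⊆ C ∪ C' := by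
  classical
  obtain ⟨u, t, hu, ht, hut⟩ := (Set.one_lt_ncard_iff (Set.finite_of_ncard_pos (by omega))).mp
    (by omega : 1 < (S ∩ S').ncard)
  obtain ⟨⟨c, hc, rfl, rfl⟩, hodd⟩ := And.imp_left (·.exists_walk_of_mem hu.1) hC
  obtain ⟨c', hc', rfl, rfl⟩ := hC'.exists_walk_of_mem hu.2
  obtain ⟨v, q, r, hqr, hv, hqnil, hqV⟩ := (c'.takeUntil t ht.2).exists_eq_append_of_end_mem
    (S := {y | y ∈ c.support}) ht.1 (Walk.not_nil_of_ne hut)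
  have hq : q.IsPath := (hqr ▸ hc'.isPath_takeUntil ht.2).of_append_left
  have hqE : q.edges ⊆ c'.edges := fun e he =>
    c'.edges_takeUntil_subset_edges ht.2 (hqr ▸ by simp [he])
  rw [hc.isTrail.edges_nodup.ncard_sep_mem] at hodd
  obtain ⟨d, hd, hdE, hdeven⟩ := hc.exists_isCycle_even_countP hv (mt hq.nil_iff_eq.mpr hqnil)
    hq (fun e he₁ he₂ => Set.disjoint_left.mp hdisj he₁ (hqE he₂)) hqV _ hodd
  refine ⟨{e | e ∈ d.edges}, ⟨⟨_, u, d, hd, rfl, rfl⟩, ?_⟩,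
    fun e he => (hdE e he).imp id (hqE ·)⟩
  rwa [hd.isTrail.edges_nodup.ncard_sep_mem]

end CycleDecomposition

theorem stmt11_general {V : Type*} (G : SimpleGraph V) (σ : Sym2 V → Bool)
    (C C' : Set (Sym2 V)) (S S' : Set V)
    (hC : IsNegCycle G σ C S) (hC' : IsNegCycle G σ C' S')
    (hdisj : Disjoint C C') (hshare : 2 ≤ (S ∩ S').ncard) :
    ∃ 𝓟 : Finset (Set (Sym2 V)),
      (∀ D ∈ 𝓟, ∃ SD : Set V, IsCycleSet G D SD) ∧
      (𝓟 : Set (Set (Sym2 V))).PairwiseDisjoint id ∧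
      (⋃ D ∈ 𝓟, D) = C ∪ C' ∧
      ∃ D ∈ 𝓟, IsPosCycle G σ D := by
  classical
  obtain ⟨D, hD, hDsub⟩ := exists_isPosCycle_subset_union hC hC'.1 hdisj hshare
  obtain ⟨SD, hDcyc⟩ := hD.1
  have hfin : (C ∪ C').Finite := hC.1.finite.union hC'.1.finite
  have hrest : IsEvenEdgeSet G ((C ∪ C') \ D) :=
    (hC.1.isEvenEdgeSet_s11.union hC'.1.isEvenEdgeSet_s11 hC.1.finite hC'.1.finite hdisj).diff
      hDcyc.isEvenEdgeSet_s11 hDsub hfin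
  obtain ⟨𝓠, h𝓠⟩ := hrest.exists_isCycleDecomposition hfin.sdiff
  obtain ⟨hcyc, hpd, hunion⟩ := h𝓠.insert hDcyc hDsub
  exact ⟨insert D 𝓠, hcyc, hpd, hunion, D, Finset.mem_insert_self D 𝓠, hD⟩

/-- two edge-disjoint negative cycles sharing at least two vertices
decompose into edge-disjoint cycles, at least one of which is positive. -/
theorem stmt11 {V : Type*} [Fintype V] (G : SimpleGraph V) (σ : Sym2 V → Bool)
    (C C' : Set (Sym2 V)) (S S' : Set V)
    (hC : IsNegCycle G σ C S) (hC' : IsNegCycle G σ C' S')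
    (hdisj : Disjoint C C') (hshare : 2 ≤ (S ∩ S').ncard) :
    ∃ 𝓟 : Finset (Set (Sym2 V)),
      (∀ D ∈ 𝓟, ∃ SD : Set V, IsCycleSet G D SD) ∧
      (𝓟 : Set (Set (Sym2 V))).PairwiseDisjoint id ∧
      (⋃ D ∈ 𝓟, D) = C ∪ C' ∧
      ∃ D ∈ 𝓟, IsPosCycle G σ D :=
  stmt11_general G σ C C' S S' hC hC' hdisj hshare
end
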